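/- arXiv:math/0201190 — 3 statements merged into one kernel-verified Lean document; each statement's English description precedes it below -/
import Mathlib

section
/- Let n_e, n_rh, n_ch ∈ ℕ with n = 2·n_ch + n_rh + n_e ≥ 1. Let α, β : Fin n_ch → ℝ with αⱼ > 0 for all j, let r : Fin n_rh → ℝ with rⱼ > 0 for all j, let θ : Fin n_e → ℝ, and let μ : Fin n → ℂ be the concatenation of the tuples (αⱼ + iβⱼ)ⱼ, (αⱼ − iβⱼ)ⱼ, (rⱼ)ⱼ and (iθⱼ)ⱼ. Assume μ satisfies the nonresonance condition. For a polynomial p in n variables with complex coefficients, p(ξ) = ∑_{α} a_α ξ^α, and an integer k ≥ 1, define S_k(p) = ∑_{α} a_α · ∏_{j=1}^{n} (i/k)^{αⱼ} · D_{j,αⱼ}(k), where D_{j,l}(k) denotes the l-th complex derivative of the function t ↦ (2·sinh(k·t/2))⁻¹ evaluated at the point μⱼ. Then the map p ↦ (S_k(p))_{k≥1} is injective: if p and q are two polynomials in n variables with S_k(p) = S_k(q) for every integer k ≥ 1, then p = q. (Lemma 3.1 of the paper: the coefficients of p can be recovered from the values p(i k⁻¹ ∂_μ) ∏ⱼ (2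 sinh(kμⱼ/2))⁻¹, k → ∞.) -/
open Complex BigOperators Real

/-- The nonresonance condition: no nontrivial integer combination of the `μⱼ`
lies in `2πi·ℤ`. -/
def Nonresonant {n : ℕ} (μ : Fin n → ℂ) : Prop :=
  ∀ k : Fin n → ℤ,
    (∃ m : ℤ, (∑ j, (k j : ℂ) * μ j) = 2 * (Real.pi : ℂ) * Complex.I * (m : ℂ)) →
      k = 0

/-- `S_k(p) = ∑_α a_α ∏ⱼ (i/k)^{αⱼ} D_{j,αⱼ}(k)`, where `D_{j,l}(k)` is the `l`-th
complex derivative of `t ↦ (2 sinh(kt/2))⁻¹` at `μⱼ`. -/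
noncomputable def Sval {n : ℕ} (μ : Fin n → ℂ) (k : ℕ) (p : MvPolynomial (Fin n) ℂ) : ℂ :=
  ∑ α ∈ p.support, p.coeff α *
    ∏ j, (Complex.I / (k : ℂ)) ^ α j *
      iteratedDeriv (α j) (fun t : ℂ => (2 * Complex.sinh ((k : ℂ) * t / 2))⁻¹) (μ j)

section RecoverAux
open Polynomial
variable {n : ℕ}

noncomputable def shN : ℕ → Polynomial ℂ
  | 0 => 1
  | (l+1) =>
      -(Polynomial.C (1/2 : ℂ)) * (shN l) * (1 - Polynomial.X)
      - Polynomial.X * (Polynomial.derivative (shN l)) * (1 - Polynomial.X)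
      - Polynomial.C ((l : ℂ) + 1) * (Polynomial.X * shN l)

lemma shN_eval_one (l : ℕ) : (shN l).eval 1 = (-1)^l * (Nat.factorial l : ℂ) := by
  induction l with
  | zero => simp [shN]
  | succ l ih =>
      simp only [shN, eval_sub, eval_mul, eval_neg, eval_C, eval_X, eval_one, ih,
        Nat.factorial_succ, Nat.cast_mul, Nat.cast_add, Nat.cast_one]
      ring

lemma shN_eval_one_ne_zero (l : ℕ) : (shN l).eval 1 ≠ 0 := by
  rw [shN_eval_one]
  exact mul_ne_zero (pow_ne_zero _ (by norm_num)) (Nat.cast_ne_zero.mpr (Nat.factorial_ne_zero l))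

lemma sinh_iteratedDeriv (K : ℂ) (l : ℕ) {t : ℂ} (ht : Complex.exp (-(K*t)) ≠ 1) :
    iteratedDeriv l (fun s : ℂ => (2 * Complex.sinh (K*s/2))⁻¹) t
      = K^l * Complex.exp (-(K*t)/2) * (shN l).eval (Complex.exp (-(K*t)))
          / (1 - Complex.exp (-(K*t)))^(l+1) := by
  induction l generalizing t with
  | zero =>
      simp only [iteratedDeriv_zero, pow_one, pow_zero, one_mul, shN, eval_one, mul_one]
      have h1 : 1 - Complex.exp (-(K*t)) ≠ 0 := by
        intro h; exact ht (by linear_combination -h)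
      have h2 : 2 * Complex.sinh (K*t/2) = Complex.exp (K*t/2) - Complex.exp (-(K*t)/2) := by
        rw [Complex.sinh]; ring_nf
      have e1 : K*t/2 + (-(K*t)/2) = 0 := by ring
      have e2 : -(K*t)/2 + (-(K*t)/2) = -(K*t) := by ring
      have hkey : (Complex.exp (K*t/2) - Complex.exp (-(K*t)/2)) * Complex.exp (-(K*t)/2)
          = 1 - Complex.exp (-(K*t)) := by
        rw [sub_mul, ← Complex.exp_add, ← Complex.exp_add, e1, e2, Complex.exp_zero]
      have hne : Complex.exp (K*t/2) - Complex.exp (-(K*t)/2) ≠ 0 := fun h => h1 (by rw [← hkey, h, zero_mul])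
      rw [h2, pow_one, eq_div_iff h1, ← hkey, ← mul_assoc, inv_mul_cancel₀ hne, one_mul]
  | succ l ih =>
      have hU : IsOpen {s : ℂ | Complex.exp (-(K*s)) ≠ 1} := by
        have hc : Continuous fun s : ℂ => Complex.exp (-(K*s)) := by continuity
        exact isOpen_ne.preimage hc
      have hev : (iteratedDeriv l (fun s : ℂ => (2 * Complex.sinh (K*s/2))⁻¹)) =ᶠ[nhds t]
          (fun s => K^l * Complex.exp (-(K*s)/2) * (shN l).eval (Complex.exp (-(K*s)))
            / (1 - Complex.exp (-(K*s)))^(l+1)) :=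
        Filter.eventuallyEq_of_mem (hU.mem_nhds ht) (fun s hs => ih hs)
      rw [iteratedDeriv_succ, hev.deriv_eq]
      have h1 : 1 - Complex.exp (-(K*t)) ≠ 0 := by
        intro h; exact ht (by linear_combination -h)
      have hu : HasDerivAt (fun s : ℂ => Complex.exp (-(K*s))) (Complex.exp (-(K*t)) * (-K)) t := by
        have h0 : HasDerivAt (fun s : ℂ => -(K*s)) (-K) t := by
          exact (((hasDerivAt_id t).const_mul K).neg).congr_deriv (by ring)
        exact h0.cexp
      have he : HasDerivAt (fun s : ℂ => Complex.exp (-(K*s)/2)) (Complex.exp (-(K*t)/2) * (-K/2)) t := by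
        have h0 : HasDerivAt (fun s : ℂ => -(K*s)/2) (-K/2) t := by
          simpa using (((hasDerivAt_id t).const_mul K).neg.div_const 2)
        exact h0.cexp
      have hN : HasDerivAt (fun s : ℂ => (shN l).eval (Complex.exp (-(K*s))))
          ((Polynomial.derivative (shN l)).eval (Complex.exp (-(K*t))) * (Complex.exp (-(K*t)) * (-K))) t :=
        (Polynomial.hasDerivAt (shN l) _).comp t hu
      have hd1 : HasDerivAt (fun s : ℂ => 1 - Complex.exp (-(K*s))) (-(Complex.exp (-(K*t)) * (-K))) t :=
        hu.const_sub 1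
      have hpow := hd1.pow (l+1)
      have hinv := hpow.inv (pow_ne_zero _ h1)
      have htot := ((he.mul hN).mul hinv).const_mul (K^l)
      rw [show (fun s : ℂ => K^l * Complex.exp (-(K*s)/2) * (shN l).eval (Complex.exp (-(K*s)))
            / (1 - Complex.exp (-(K*s)))^(l+1))
          = (fun s : ℂ => K^l * (Complex.exp (-(K*s)/2) * (shN l).eval (Complex.exp (-(K*s)))
            * ((1 - Complex.exp (-(K*s)))^(l+1))⁻¹)) from funext (fun s => by ring)]
      refine htot.deriv.trans ?_
      simp only [shN, Polynomial.eval_sub, Polynomial.eval_mul, Polynomial.eval_neg,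
        Polynomial.eval_C, Polynomial.eval_X, Polynomial.eval_one, Nat.add_sub_cancel,
        Pi.mul_apply, Pi.pow_apply, Pi.inv_apply]
      field_simp
      push_cast
      ring

lemma eval_aeval (v : Fin n → ℂ) (j : Fin n) (P : Polynomial ℂ) :
    MvPolynomial.eval v (Polynomial.aeval (MvPolynomial.X j) P) = P.eval (v j) := by
  induction P using Polynomial.induction_on' with
  | add p q hp hq => simp [hp, hq]
  | monomial s a => simp [Polynomial.aeval_monomial, MvPolynomial.algebraMap_eq]

lemma aeval_one_add (j : Fin n) (P : Polynomial ℂ) :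
    MvPolynomial.aeval (R := ℂ) (fun i : Fin n => (1 + MvPolynomial.X i : MvPolynomial (Fin n) ℂ))
        (Polynomial.aeval (MvPolynomial.X j) P)
      = Polynomial.aeval (MvPolynomial.X j) (P.comp (1 + Polynomial.X)) := by
  induction P using Polynomial.induction_on' with
  | add p q hp hq => simp only [map_add, hp, hq, add_comp]
  | monomial s a =>
      simp only [Polynomial.aeval_monomial, MvPolynomial.algebraMap_eq, monomial_comp,
        map_mul, map_pow, MvPolynomial.aeval_C, MvPolynomial.aeval_X, C_comp, X_comp, map_add,
        map_one, Polynomial.aeval_X, Polynomial.aeval_one, Polynomial.aeval_C,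
        Polynomial.algebraMap_eq]


lemma prod_monomial {ι : Type*} (s : Finset ι) (d : ι → (Fin n →₀ ℕ)) (c : ι → ℂ) :
    ∏ i ∈ s, MvPolynomial.monomial (d i) (c i)
      = MvPolynomial.monomial (∑ i ∈ s, d i) (∏ i ∈ s, c i) := by
  classical
  induction s using Finset.cons_induction with
  | empty => simp
  | cons a s ha ih =>
      rw [Finset.prod_cons, Finset.sum_cons, Finset.prod_cons, ih,
        MvPolynomial.monomial_mul]

lemma sum_single_apply (g : Fin n → ℕ) (j' : Fin n) :
    (∑ j, Finsupp.single j (g j)) j' = g j' := by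
  classical
  rw [Finsupp.finset_sum_apply]
  rw [Finset.sum_eq_single j' (fun j _ hj => Finsupp.single_eq_of_ne' hj) (by simp)]
  exact Finsupp.single_eq_same

lemma coeff_prod_aeval (P : Fin n → Polynomial ℂ) (b : Fin n →₀ ℕ) :
    MvPolynomial.coeff b (∏ j, Polynomial.aeval (MvPolynomial.X j) (P j))
      = ∏ j, (P j).coeff (b j) := by
  classical
  set m := (Finset.univ.sup fun j : Fin n => max ((P j).natDegree) (b j)) + 1 with hm
  have hsup : ∀ j : Fin n, max ((P j).natDegree) (b j)
      ≤ Finset.univ.sup fun j : Fin n => max ((P j).natDegree) (b j) :=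
    fun j => Finset.le_sup (f := fun j : Fin n => max ((P j).natDegree) (b j)) (Finset.mem_univ j)
  have hdeg : ∀ j, (P j).natDegree < m :=
    fun j => Nat.lt_succ_of_le ((le_max_left _ _).trans (hsup j))
  have hb : ∀ j, b j < m :=
    fun j => Nat.lt_succ_of_le ((le_max_right _ _).trans (hsup j))
  have hexp : ∀ j, Polynomial.aeval (MvPolynomial.X j) (P j)
      = ∑ s ∈ Finset.range m, MvPolynomial.C ((P j).coeff s) * MvPolynomial.X j ^ s := by
    intro j
    conv_lhs => rw [Polynomial.as_sum_range' (P j) m (hdeg j)]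
    rw [map_sum]
    exact Finset.sum_congr rfl fun s _ => by
      simp [Polynomial.aeval_monomial, MvPolynomial.algebraMap_eq]
  simp_rw [hexp]
  rw [Finset.prod_univ_sum]
  have hmono : ∀ g : Fin n → ℕ,
      (∏ j, MvPolynomial.C ((P j).coeff (g j)) * MvPolynomial.X j ^ g j)
        = MvPolynomial.monomial (∑ j, Finsupp.single j (g j)) (∏ j, (P j).coeff (g j)) := by
    intro g
    rw [← prod_monomial]
    exact Finset.prod_congr rfl fun j _ => MvPolynomial.C_mul_X_pow_eq_monomial
  simp_rw [hmono]
  rw [MvPolynomial.coeff_sum]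
  simp_rw [MvPolynomial.coeff_monomial]
  rw [Finset.sum_eq_single (⇑b : Fin n → ℕ)]
  · rw [if_pos (Finsupp.ext fun j' => sum_single_apply (⇑b) j')]
  · intro g _ hg
    rw [if_neg]
    intro h
    exact hg (funext fun j' => by rw [← sum_single_apply g j', h])
  · intro hmem
    exact absurd (Fintype.mem_piFinset.mpr fun j => Finset.mem_range.mpr (hb j)) hmem

end RecoverAux


section KeyAux
open Polynomial
variable {n : ℕ}

theorem key (μ : Fin n → ℂ) (hμ : Nonresonant μ) (f : MvPolynomial (Fin n) ℂ)
    (hS : ∀ k : ℕ, 1 ≤ k → Sval μ k f = 0) : f = 0 := by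
  classical
  by_contra hf
  set D := f.totalDegree with hD
  have hsumconv : ∀ a : Fin n →₀ ℕ, (a.sum fun _ e => e) = ∑ j, a j :=
    fun a => Finsupp.sum_fintype _ _ (fun _ => rfl)
  have hαD : ∀ a ∈ f.support, ∀ j, a j ≤ D := by
    intro a ha j
    refine le_trans ?_ (MvPolynomial.le_totalDegree ha)
    rw [hsumconv]
    exact Finset.single_le_sum (f := fun j => a j) (fun _ _ => Nat.zero_le _) (Finset.mem_univ j)
  set Q : ℕ → Polynomial ℂ :=
    fun l => Polynomial.C (Complex.I ^ l) * shN l * (1 - Polynomial.X) ^ (D - l) with hQ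
  set G : MvPolynomial (Fin n) ℂ :=
    ∑ α ∈ f.support, MvPolynomial.C (f.coeff α) *
      ∏ j, Polynomial.aeval (MvPolynomial.X j) (Q (α j)) with hG
  set w : Fin n → ℂ := fun j => Complex.exp (-μ j) with hw
  -- basic nonresonance consequences
  have hune : ∀ (k : ℕ), 1 ≤ k → ∀ j, Complex.exp (-((k:ℂ) * μ j)) ≠ 1 := by
    intro k hk j h
    obtain ⟨m, hm⟩ := Complex.exp_eq_one_iff.mp h
    have hsum1 : (∑ j', ((if j' = j then (k : ℤ) else 0 : ℤ) : ℂ) * μ j')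
        = 2 * (Real.pi : ℂ) * Complex.I * ((-m : ℤ) : ℂ) := by
      rw [Finset.sum_eq_single j (fun j' _ hj' => by simp [hj']) (by simp)]
      rw [if_pos rfl]
      push_cast
      linear_combination -hm
    have h0 := hμ _ ⟨-m, hsum1⟩
    have h1 := congrFun h0 j
    simp only [if_pos rfl, Pi.zero_apply] at h1
    exact (show (k:ℤ) ≠ 0 by exact_mod_cast Nat.one_le_iff_ne_zero.mp hk) h1
  have hprodw : ∀ m : Fin n →₀ ℕ, (∏ j, w j ^ m j)
      = Complex.exp (-∑ j, (m j : ℂ) * μ j) := by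
    intro m
    have hwpow : ∀ j, w j ^ m j = Complex.exp ((m j : ℂ) * (-μ j)) :=
      fun j => (Complex.exp_nat_mul _ _).symm
    simp_rw [hwpow, ← Complex.exp_sum]
    congr 1
    rw [← Finset.sum_neg_distrib]
    exact Finset.sum_congr rfl fun j _ => by ring
  have hLinj : ∀ m m' : Fin n →₀ ℕ,
      (∏ j, w j ^ m j) = (∏ j, w j ^ m' j) → m = m' := by
    intro m m' hmm
    rw [hprodw, hprodw] at hmm
    obtain ⟨nn, hnn⟩ := Complex.exp_eq_exp_iff_exists_int.mp hmm
    have hsum1 : (∑ j, (((m j : ℤ) - (m' j : ℤ) : ℤ) : ℂ) * μ j)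
        = 2 * (Real.pi : ℂ) * Complex.I * ((-nn : ℤ) : ℂ) := by
      push_cast
      rw [show (∑ j, ((m j : ℂ) - (m' j : ℂ)) * μ j)
          = (∑ j, (m j : ℂ) * μ j) - ∑ j, (m' j : ℂ) * μ j by
        rw [← Finset.sum_sub_distrib]; exact Finset.sum_congr rfl fun j _ => by ring]
      linear_combination -hnn
    have h0 := hμ _ ⟨-nn, hsum1⟩
    ext j
    have h1 := congrFun h0 j
    simp only [Pi.zero_apply, sub_eq_zero] at h1
    exact_mod_cast h1
  have hLne : ∀ m : Fin n →₀ ℕ, (∏ j, w j ^ m j) ≠ 0 :=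
    fun m => Finset.prod_ne_zero_iff.mpr fun j _ => pow_ne_zero _ (Complex.exp_ne_zero _)
  -- Step 1 : G evaluates to 0 at the points w^k
  have hEval : ∀ k : ℕ, 1 ≤ k → MvPolynomial.eval (fun j => w j ^ k) G = 0 := by
    intro k hk
    have hK : ((k:ℂ)) ≠ 0 := Nat.cast_ne_zero.mpr (Nat.one_le_iff_ne_zero.mp hk)
    set u : Fin n → ℂ := fun j => Complex.exp (-((k:ℂ) * μ j)) with hu
    have hwk : ∀ j, w j ^ k = u j := by
      intro j
      rw [hw, hu, ← Complex.exp_nat_mul]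
      congr 1; ring
    have h1u : ∀ j, 1 - u j ≠ 0 := fun j => sub_ne_zero.mpr fun h => hune k hk j h.symm
    set c : ℂ := ∏ j, Complex.exp (-((k:ℂ) * μ j)/2) / (1 - u j)^(D+1) with hc
    have hcne : c ≠ 0 := Finset.prod_ne_zero_iff.mpr fun j _ =>
      div_ne_zero (Complex.exp_ne_zero _) (pow_ne_zero _ (h1u j))
    have hevalG : MvPolynomial.eval (fun j => w j ^ k) G
        = ∑ α ∈ f.support, f.coeff α * ∏ j, (Q (α j)).eval (u j) := by
      rw [hG, map_sum]
      refine Finset.sum_congr rfl fun α _ => ?_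
      rw [map_mul, MvPolynomial.eval_C, map_prod]
      congr 1
      exact Finset.prod_congr rfl fun j _ => by rw [eval_aeval, hwk]
    have hterm : ∀ (l : ℕ), l ≤ D → ∀ j : Fin n,
        (Complex.I / (k:ℂ))^l
            * iteratedDeriv l (fun t : ℂ => (2*Complex.sinh ((k:ℂ)*t/2))⁻¹) (μ j)
          = Complex.exp (-((k:ℂ) * μ j)/2) / (1 - u j)^(D+1) * (Q l).eval (u j) := by
      intro l hl j
      rw [sinh_iteratedDeriv (k:ℂ) l (hune k hk j), hQ]
      simp only [eval_mul, eval_C, eval_pow, eval_sub, eval_one, eval_X]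
      rw [div_pow, div_mul_div_comm, div_mul_eq_mul_div,
        div_eq_div_iff (mul_ne_zero (pow_ne_zero _ hK) (pow_ne_zero _ (h1u j)))
          (pow_ne_zero _ (h1u j))]
      rw [show (1 - u j)^(D+1) = (1 - u j)^(l+1) * (1 - u j)^(D - l) from by
        rw [← pow_add]; congr 1; omega]
      ring
    have h2 : ∀ α ∈ f.support,
        (∏ j, (Complex.I/(k:ℂ))^(α j)
          * iteratedDeriv (α j) (fun t : ℂ => (2*Complex.sinh ((k:ℂ)*t/2))⁻¹) (μ j))
        = c * ∏ j, (Q (α j)).eval (u j) := by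
      intro α hα'
      rw [hc, ← Finset.prod_mul_distrib]
      exact Finset.prod_congr rfl fun j _ => hterm (α j) (hαD α hα' j) j
    have h3 : Sval μ k f = c * ∑ α ∈ f.support, f.coeff α * ∏ j, (Q (α j)).eval (u j) := by
      simp only [Sval]
      rw [Finset.mul_sum]
      exact Finset.sum_congr rfl fun α hα' => by rw [h2 α hα']; ring
    have h4 := hS k hk
    rw [h3] at h4
    rw [hevalG]
    exact (mul_eq_zero.mp h4).resolve_left hcne
  -- Step 2 : G = 0
  have hG0 : G = 0 := by
    have hEv : ∀ K : ℕ, 1 ≤ K →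
        ∑ m ∈ G.support, MvPolynomial.coeff m G * (∏ j, w j ^ m j)^K = 0 := by
      intro K hK1
      have h := hEval K hK1
      rw [MvPolynomial.eval_eq'] at h
      rw [← h]
      refine Finset.sum_congr rfl fun m _ => ?_
      congr 1
      rw [← Finset.prod_pow]
      exact Finset.prod_congr rfl fun j _ => (pow_right_comm _ _ _)
    have li : LinearIndependent ℂ
        (fun m : {x // x ∈ G.support} => ⇑(powersHom ℂ (∏ j, w j ^ (m : Fin n →₀ ℕ) j))) := by
      refine (linearIndependent_monoidHom (Multiplicative ℕ) ℂ).comp _ ?_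
      intro m m' hmm'
      have h1 := congrArg (fun φ : Multiplicative ℕ →* ℂ => φ (Multiplicative.ofAdd 1)) hmm'
      simp only [powersHom_apply, toAdd_ofAdd, pow_one] at h1
      exact Subtype.ext (hLinj _ _ h1)
    have hzero : (∑ m : {x // x ∈ G.support},
        (MvPolynomial.coeff (m : Fin n →₀ ℕ) G * ∏ j, w j ^ (m : Fin n →₀ ℕ) j) •
          ⇑(powersHom ℂ (∏ j, w j ^ (m : Fin n →₀ ℕ) j))) = 0 := by
      funext x
      simp only [Finset.sum_apply, Pi.smul_apply, smul_eq_mul, Pi.zero_apply]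
      have hx : ∀ a : ℂ, (powersHom ℂ a) x = a ^ (Multiplicative.toAdd x) := fun a => rfl
      simp_rw [hx]
      have hthis := hEv (Multiplicative.toAdd x + 1) (Nat.le_add_left 1 _)
      rw [← Finset.sum_attach G.support
        (fun m => MvPolynomial.coeff m G * (∏ j, w j ^ m j)^(Multiplicative.toAdd x + 1))] at hthis
      rw [← hthis]
      exact Finset.sum_congr rfl fun m _ => by rw [pow_succ]; ring
    have hcoeff := Fintype.linearIndependent_iff.mp li _ hzero
    by_contra hGne
    obtain ⟨m, hm⟩ := MvPolynomial.support_nonempty.mpr hGne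
    have h2 := hcoeff ⟨m, hm⟩
    rcases mul_eq_zero.mp h2 with h3 | h3
    · exact (MvPolynomial.mem_support_iff.mp hm) h3
    · exact hLne m h3
  -- Step 3 : contradiction
  have hsupp : f.support.Nonempty := MvPolynomial.support_nonempty.mpr hf
  obtain ⟨α₀, hα₀mem, hα₀⟩ :=
    Finset.exists_mem_eq_sup f.support hsupp (fun s : Fin n →₀ ℕ => s.sum fun _ e => e)
  have hDα₀ : D = ∑ j, α₀ j := by
    rw [hD, MvPolynomial.totalDegree, hα₀, hsumconv]
  set T : MvPolynomial (Fin n) ℂ →ₐ[ℂ] MvPolynomial (Fin n) ℂ :=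
    MvPolynomial.aeval (fun i : Fin n => (1 + MvPolynomial.X i : MvPolynomial (Fin n) ℂ)) with hT
  set b : Fin n →₀ ℕ := Finsupp.equivFunOnFinite.symm (fun j => D - α₀ j) with hb
  have hbj : ∀ j, b j = D - α₀ j := fun j => rfl
  have hTG : T G = ∑ α ∈ f.support, MvPolynomial.C (f.coeff α) *
      ∏ j, Polynomial.aeval (MvPolynomial.X j) ((Q (α j)).comp (1 + Polynomial.X)) := by
    rw [hG, map_sum]
    refine Finset.sum_congr rfl fun α _ => ?_
    rw [map_mul, map_prod]
    congr 1
    · simp [hT, MvPolynomial.aeval_C, MvPolynomial.algebraMap_eq]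
    · exact Finset.prod_congr rfl fun j _ => aeval_one_add j (Q (α j))
  have hcoeffTG : MvPolynomial.coeff b (T G)
      = ∑ α ∈ f.support, f.coeff α *
          ∏ j, ((Q (α j)).comp (1 + Polynomial.X)).coeff (b j) := by
    rw [hTG, MvPolynomial.coeff_sum]
    exact Finset.sum_congr rfl fun α _ => by
      rw [MvPolynomial.coeff_C_mul, coeff_prod_aeval]
  have hQcomp : ∀ l, (Q l).comp (1 + Polynomial.X)
      = (Polynomial.C ((-1:ℂ)^(D-l) * Complex.I^l) * ((shN l).comp (1 + Polynomial.X)))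
          * Polynomial.X^(D-l) := by
    intro l
    rw [hQ]
    simp only [mul_comp, pow_comp, sub_comp, one_comp, X_comp, C_comp]
    rw [show (1 : Polynomial ℂ) - (1 + Polynomial.X) = -Polynomial.X from by ring]
    rw [neg_pow]
    simp only [map_mul, map_pow, map_neg, map_one]
    ring
  have hcoefflow : ∀ l, l ≤ D → ((Q l).comp (1 + Polynomial.X)).coeff (D - l)
      = (-1:ℂ)^(D-l) * Complex.I^l * (shN l).eval 1 := by
    intro l hl
    rw [hQcomp l, Polynomial.coeff_mul_X_pow', if_pos le_rfl, Nat.sub_self,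
      Polynomial.coeff_C_mul, Polynomial.coeff_zero_eq_eval_zero, Polynomial.eval_comp]
    simp [mul_assoc]
  have hcoeffzero : ∀ l l', l' < l → l ≤ D →
      ((Q l').comp (1 + Polynomial.X)).coeff (D - l) = 0 := by
    intro l l' hl' hlD
    rw [hQcomp l', Polynomial.coeff_mul_X_pow', if_neg (by omega)]
  have hother : ∀ α ∈ f.support, α ≠ α₀ →
      (∏ j, ((Q (α j)).comp (1 + Polynomial.X)).coeff (b j)) = 0 := by
    intro α hαmem hαne
    have hex : ∃ j, α j < α₀ j := by
      by_contra hcon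
      push_neg at hcon
      obtain ⟨j₁, hj₁⟩ : ∃ j₁, α j₁ ≠ α₀ j₁ := by
        by_contra hcon2; push_neg at hcon2; exact hαne (Finsupp.ext hcon2)
      have hlt : (∑ j, α₀ j) < ∑ j, α j :=
        Finset.sum_lt_sum (fun j _ => hcon j)
          ⟨j₁, Finset.mem_univ j₁, lt_of_le_of_ne (hcon j₁) (Ne.symm hj₁)⟩
      have hle : (∑ j, α j) ≤ D := by
        rw [← hsumconv]
        exact MvPolynomial.le_totalDegree hαmem
      omega
    obtain ⟨j₁, hj₁⟩ := hex
    apply Finset.prod_eq_zero (Finset.mem_univ j₁)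
    rw [hbj]
    exact hcoeffzero (α₀ j₁) (α j₁) hj₁ (hαD α₀ hα₀mem j₁)
  have hfinal : MvPolynomial.coeff b (T G)
      = f.coeff α₀ * ∏ j, ((-1:ℂ)^(D - α₀ j) * Complex.I^(α₀ j) * (shN (α₀ j)).eval 1) := by
    rw [hcoeffTG]
    rw [Finset.sum_eq_single α₀
      (fun α hα' hne' => by rw [hother α hα' hne', mul_zero])
      (fun hnotmem => absurd hα₀mem hnotmem)]
    congr 1
    exact Finset.prod_congr rfl fun j _ => by
      rw [hbj]; exact hcoefflow (α₀ j) (hαD α₀ hα₀mem j)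
  rw [hG0, map_zero, MvPolynomial.coeff_zero] at hfinal
  have hne2 : f.coeff α₀ *
      ∏ j, ((-1:ℂ)^(D - α₀ j) * Complex.I^(α₀ j) * (shN (α₀ j)).eval 1) ≠ 0 := by
    apply mul_ne_zero (MvPolynomial.mem_support_iff.mp hα₀mem)
    exact Finset.prod_ne_zero_iff.mpr fun j _ =>
      mul_ne_zero (mul_ne_zero (pow_ne_zero _ (by norm_num)) (pow_ne_zero _ Complex.I_ne_zero))
        (shN_eval_one_ne_zero _)
  exact hne2 hfinal.symm

end KeyAux

lemma Sval_eq_sum_subset (μ : Fin n → ℂ) (k : ℕ) (p : MvPolynomial (Fin n) ℂ)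
    (A : Finset (Fin n →₀ ℕ)) (hA : p.support ⊆ A) :
    Sval μ k p = ∑ α ∈ A, p.coeff α *
      ∏ j, (Complex.I / (k : ℂ)) ^ α j *
        iteratedDeriv (α j) (fun t : ℂ => (2 * Complex.sinh ((k : ℂ) * t / 2))⁻¹) (μ j) :=
  Finset.sum_subset hA (fun x _ hx => by
    rw [MvPolynomial.notMem_support_iff.mp hx, zero_mul])

lemma Sval_sub (μ : Fin n → ℂ) (k : ℕ) (p q : MvPolynomial (Fin n) ℂ) :
    Sval μ k (p - q) = Sval μ k p - Sval μ k q := by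
  classical
  set A := (p - q).support ∪ (p.support ∪ q.support) with hA
  rw [Sval_eq_sum_subset μ k (p - q) A Finset.subset_union_left,
    Sval_eq_sum_subset μ k p A (Finset.subset_union_left.trans Finset.subset_union_right),
    Sval_eq_sum_subset μ k q A (Finset.subset_union_right.trans Finset.subset_union_right),
    ← Finset.sum_sub_distrib]
  exact Finset.sum_congr rfl fun α _ => by rw [MvPolynomial.coeff_sub]; ring


/-- Lemma 3.1 of the paper: with `μ` the concatenation of the complex-hyperbolic
exponents `αⱼ ± iβⱼ` (`αⱼ > 0`), the real-hyperbolic exponents `rⱼ > 0` and the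
elliptic exponents `iθⱼ`, satisfying the nonresonance condition, a polynomial `p` in
`n` variables is determined by the values `S_k(p)`, `k ≥ 1`:
the map `p ↦ (S_k(p))_{k ≥ 1}` is injective. -/
theorem recover_polynomial_from_sinh_derivatives
    (n_e n_rh n_ch n : ℕ) (hn : n = 2 * n_ch + n_rh + n_e) (hn1 : 1 ≤ n)
    (α β : Fin n_ch → ℝ) (hα : ∀ j, 0 < α j)
    (r : Fin n_rh → ℝ) (hr : ∀ j, 0 < r j)
    (θ : Fin n_e → ℝ)
    (μ : Fin n → ℂ)
    (hμdef : ∀ j : Fin (n_ch + n_ch + n_rh + n_e),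
      μ (Fin.cast (by omega) j) =
        Fin.append (Fin.append
            (Fin.append (fun i => (α i : ℂ) + Complex.I * (β i : ℂ))
              (fun i => (α i : ℂ) - Complex.I * (β i : ℂ)))
            (fun i => (r i : ℂ)))
          (fun i => Complex.I * (θ i : ℂ)) j)
    (hμ : Nonresonant μ)
    (p q : MvPolynomial (Fin n) ℂ)
    (hpq : ∀ k : ℕ, 1 ≤ k → Sval μ k p = Sval μ k q) :
    p = q := by
  have h := key μ hμ (p - q) (fun k hk => by rw [Sval_sub, hpq k hk, sub_self])
  exact sub_eq_zero.mp h
end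

section
/- Let n ≥ 1 and let α ∈ ℝⁿ satisfy: for every k ∈ ℤⁿ, if the inner product ⟨α, k⟩ belongs to 2πℤ then k = 0. Then for every y ∈ ℝⁿ and every ε > 0 there exist N ∈ ℕ and K ∈ ℤⁿ such that ‖y − N·α − 2π·K‖ < ε. (Kronecker's theorem, as stated and used in the paper: the multiples of α are dense in the torus ℝⁿ/2πℤⁿ.) -/
open BigOperators Real

noncomputable section KroneckerAux

variable {n : ℕ}

local notation "E" => EuclideanSpace ℝ (Fin n)

/-- isolation lemma: a closed set closed under ℤ-smul containing no full line through a
unit vector has 0 isolated. -/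
lemma kron_isolation (S : Set (EuclideanSpace ℝ (Fin n))) (hS : IsClosed S)
    (hsmul : ∀ (m : ℤ), ∀ x ∈ S, m • x ∈ S)
    (hno : ∀ u : EuclideanSpace ℝ (Fin n), ‖u‖ = 1 → (∀ t : ℝ, t • u ∈ S) → False) :
    ∃ ε > 0, ∀ x ∈ S, ‖x‖ < ε → x = 0 := by
  by_contra h
  push_neg at h
  have hseq : ∀ i : ℕ, ∃ x : EuclideanSpace ℝ (Fin n), x ∈ S ∧ ‖x‖ < 1/(i+1) ∧ x ≠ 0 := by
    intro i
    obtain ⟨x, hxS, hxn, hx0⟩ := h (1/(i+1)) (by positivity)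
    exact ⟨x, hxS, hxn, hx0⟩
  choose x hxS hxn hx0 using hseq
  set u : ℕ → EuclideanSpace ℝ (Fin n) := fun i => ‖x i‖⁻¹ • x i with hu
  have hnx : ∀ i, (0:ℝ) < ‖x i‖ := fun i => norm_pos_iff.2 (hx0 i)
  have hun : ∀ i, ‖u i‖ = 1 := by
    intro i
    rw [hu]; simp [norm_smul, abs_of_pos (inv_pos.2 (hnx i)), inv_mul_cancel₀ (hnx i).ne']
  have hus : ∀ i, u i ∈ Metric.sphere (0 : EuclideanSpace ℝ (Fin n)) 1 := by
    intro i; simpa [Metric.mem_sphere, dist_eq_norm] using hun i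
  obtain ⟨v, hv, φ, hφ, hφt⟩ := (isCompact_sphere (0 : EuclideanSpace ℝ (Fin n)) 1).tendsto_subseq hus
  have hvn : ‖v‖ = 1 := by simpa [dist_eq_norm] using hv
  refine hno v hvn fun t => ?_
  -- t • v is a limit of ⌊t/‖x (φ i)‖⌋ • x (φ i) ∈ S
  have hx0' : Filter.Tendsto (fun i => ‖x (φ i)‖) Filter.atTop (nhds 0) := by
    have : Filter.Tendsto (fun i : ℕ => 1/((i:ℝ)+1)) Filter.atTop (nhds 0) :=
      tendsto_one_div_add_atTop_nhds_zero_nat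
    refine squeeze_zero (fun i => (norm_nonneg _)) (fun i => (hxn (φ i)).le.trans ?_) this
    have h' : (i:ℝ) ≤ (φ i : ℝ) := by exact_mod_cast hφ.id_le i
    have h1 : (0:ℝ) < (i:ℝ)+1 := by positivity
    apply div_le_div_of_nonneg_left (by norm_num) h1
    linarith
  have hc : Filter.Tendsto (fun i => (⌊t / ‖x (φ i)‖⌋ : ℝ) * ‖x (φ i)‖) Filter.atTop (nhds t) := by
    have hbound : ∀ i, |(⌊t / ‖x (φ i)‖⌋ : ℝ) * ‖x (φ i)‖ - t| ≤ ‖x (φ i)‖ := by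
      intro i
      have hr := hnx (φ i)
      have h1 : (⌊t / ‖x (φ i)‖⌋ : ℝ) ≤ t / ‖x (φ i)‖ := Int.floor_le _
      have h2 : t / ‖x (φ i)‖ - 1 ≤ (⌊t / ‖x (φ i)‖⌋ : ℝ) := by
        linarith [Int.lt_floor_add_one (t / ‖x (φ i)‖)]
      rw [abs_le]
      constructor
      · nlinarith [mul_le_mul_of_nonneg_right h2 hr.le, div_mul_cancel₀ t hr.ne']
      · nlinarith [mul_le_mul_of_nonneg_right h1 hr.le, div_mul_cancel₀ t hr.ne']
    have : Filter.Tendsto (fun i => (⌊t / ‖x (φ i)‖⌋ : ℝ) * ‖x (φ i)‖ - t) Filter.atTop (nhds 0) := by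
      refine squeeze_zero_norm (fun i => by simpa using hbound i) hx0'
    simpa using this.add_const t
  have hlim : Filter.Tendsto (fun i => (⌊t / ‖x (φ i)‖⌋ : ℤ) • x (φ i)) Filter.atTop (nhds (t • v)) := by
    have : ∀ i, (⌊t / ‖x (φ i)‖⌋ : ℤ) • x (φ i)
        = ((⌊t / ‖x (φ i)‖⌋ : ℝ) * ‖x (φ i)‖) • u (φ i) := by
      intro i
      rw [hu, ← Int.cast_smul_eq_zsmul ℝ, smul_smul, mul_assoc,
        mul_inv_cancel₀ (hnx (φ i)).ne', mul_one]
    simp_rw [this]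
    exact hc.smul hφt
  exact hS.mem_of_tendsto hlim (Filter.Eventually.of_forall fun i => hsmul _ _ (hxS (φ i)))

end KroneckerAux

section Main

variable {n : ℕ}

/-- cast integer vectors into Euclidean space -/
def kv (K : Fin n → ℤ) : EuclideanSpace ℝ (Fin n) := WithLp.toLp 2 (fun j => (K j : ℝ))

lemma kv_add (K K' : Fin n → ℤ) : kv (K + K') = kv K + kv K' := by
  ext j
  show ((K j + K' j : ℤ) : ℝ) = (K j : ℝ) + (K' j : ℝ)
  push_cast; ring

lemma kv_neg (K : Fin n → ℤ) : kv (-K) = -kv K := by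
  ext j; simp [kv]

lemma kv_zero : kv (0 : Fin n → ℤ) = 0 := by
  ext j;simp [kv]

lemma euclid_sum_single (x : EuclideanSpace ℝ (Fin n)) :
    ∑ j, x j • EuclideanSpace.single j (1:ℝ) = x := by
  ext i
  have : (∑ j, x j • EuclideanSpace.single j (1:ℝ)) i = ∑ j, (x j • EuclideanSpace.single j (1:ℝ)) i :=
    by rw [WithLp.ofLp_sum, Finset.sum_apply]
  rw [this]
  simp [EuclideanSpace.single_apply]

/-- the subgroup generated by α and 2πℤⁿ. -/
noncomputable def kronG (α : EuclideanSpace ℝ (Fin n)) : AddSubgroup (EuclideanSpace ℝ (Fin n)) where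
  carrier := {z | ∃ (N : ℤ) (K : Fin n → ℤ), z = (N : ℝ) • α + (2 * Real.pi) • kv K}
  zero_mem' := ⟨0, 0, by simp [kv_zero]⟩
  add_mem' := by
    rintro a b ⟨N₁, K₁, rfl⟩ ⟨N₂, K₂, rfl⟩
    refine ⟨N₁ + N₂, K₁ + K₂, ?_⟩
    rw [kv_add]
    push_cast
    module
  neg_mem' := by
    rintro a ⟨N, K, rfl⟩
    refine ⟨-N, -K, ?_⟩
    rw [kv_neg]
    push_cast
    module

end Main

open Submodule Module in
lemma kron_dense_int {n : ℕ} (α : EuclideanSpace ℝ (Fin n))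
    (hα : ∀ k : Fin n → ℤ, (∃ m : ℤ, (∑ j, α j * (k j : ℝ)) = 2 * Real.pi * m) → k = 0) :
    ∀ y : EuclideanSpace ℝ (Fin n), ∀ ε > 0, ∃ (N : ℤ) (K : Fin n → ℤ),
      ‖y - (N : ℝ) • α - (2 * Real.pi) • kv K‖ < ε := by
  classical
  set G := kronG α with hG
  set H := G.topologicalClosure with hHdef
  have hHclosed : IsClosed (H : Set (EuclideanSpace ℝ (Fin n))) :=
    AddSubgroup.isClosed_topologicalClosure G
  have hGH : ∀ z ∈ G, z ∈ H := fun z hz => G.le_topologicalClosure hz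
  have hαH : α ∈ H := hGH α ⟨1, 0, by simp [kv_zero]⟩
  have heH : ∀ j : Fin n, (2 * Real.pi) • EuclideanSpace.single j (1:ℝ) ∈ H := by
    intro j
    refine hGH _ ⟨0, fun i => if i = j then 1 else 0, ?_⟩
    have : kv (fun i => if i = j then (1:ℤ) else 0) = EuclideanSpace.single j (1:ℝ) := by
      ext i
      show ((if i = j then (1:ℤ) else 0 : ℤ) : ℝ) = EuclideanSpace.single j (1:ℝ) i
      rw [EuclideanSpace.single_apply]
      split <;> simp
    rw [this]; simp
  -- the maximal subspace contained in H
  set W : Submodule ℝ (EuclideanSpace ℝ (Fin n)) :=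
    { carrier := {x | ∀ t : ℝ, t • x ∈ H}
      add_mem' := by
        intro a b ha hb t
        rw [smul_add]
        exact H.add_mem (ha t) (hb t)
      zero_mem' := by intro t; rw [smul_zero]; exact H.zero_mem
      smul_mem' := by
        intro c x hx t
        rw [smul_smul]
        exact hx (t * c) } with hWdef
  have hWH : ∀ x ∈ W, x ∈ H := by
    intro x hx
    have := hx 1
    rwa [one_smul] at this
  -- main claim: H = ⊤
  have hH_top : ∀ x : EuclideanSpace ℝ (Fin n), x ∈ H := by
    by_contra hcon
    push_neg at hcon
    obtain ⟨x₀, hx₀⟩ := hcon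
    -- W ≠ ⊤
    have hWne : W ≠ ⊤ := by
      intro hW
      exact hx₀ (hWH x₀ (hW ▸ Submodule.mem_top))
    have hFne : Wᗮ ≠ ⊥ := fun h => hWne (Submodule.orthogonal_eq_bot_iff.mp h)
    haveI hFnt : Nontrivial ↥Wᗮ := Submodule.nontrivial_iff_ne_bot.mpr hFne
    -- the discrete part
    set S : Set (EuclideanSpace ℝ (Fin n)) := {x | x ∈ H ∧ x ∈ Wᗮ} with hSdef
    have hSclosed : IsClosed S :=
      hHclosed.inter (Submodule.closed_of_finiteDimensional Wᗮ)
    have hSsmul : ∀ (m : ℤ), ∀ x ∈ S, m • x ∈ S := by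
      rintro m x ⟨hxH, hxO⟩
      refine ⟨H.zsmul_mem hxH m, ?_⟩
      rw [← Int.cast_smul_eq_zsmul ℝ]
      exact Wᗮ.smul_mem _ hxO
    have hSno : ∀ u : EuclideanSpace ℝ (Fin n), ‖u‖ = 1 → (∀ t : ℝ, t • u ∈ S) → False := by
      intro u hu ht
      have huW : u ∈ W := fun t => (ht t).1
      have huO : u ∈ Wᗮ := by
        have := (ht 1).2
        rwa [one_smul] at this
      have : u = 0 := by
        have := Submodule.orthogonal_disjoint W
        exact (Submodule.disjoint_def.mp this) u huW huO
      rw [this] at hu; simp at hu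
    obtain ⟨δ, hδ, hδ'⟩ := kron_isolation S hSclosed hSsmul hSno
    -- the lattice L inside Wᗮ
    set L : Submodule ℤ ↥Wᗮ :=
      { carrier := {x | (x : EuclideanSpace ℝ (Fin n)) ∈ H}
        add_mem' := by intro a b ha hb; exact H.add_mem ha hb
        zero_mem' := by show ((0 : ↥Wᗮ) : EuclideanSpace ℝ (Fin n)) ∈ H; simp [H.zero_mem]
        smul_mem' := by
          intro c x hx
          show ((c • x : ↥Wᗮ) : EuclideanSpace ℝ (Fin n)) ∈ H
          have : ((c • x : ↥Wᗮ) : EuclideanSpace ℝ (Fin n)) = c • (x : EuclideanSpace ℝ (Fin n)) := by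
            push_cast
            rfl
          rw [this]
          exact H.zsmul_mem hx c } with hLdef
    have hLmem : ∀ x : ↥Wᗮ, x ∈ L ↔ (x : EuclideanSpace ℝ (Fin n)) ∈ H := fun x => Iff.rfl
    haveI hLdisc : DiscreteTopology L := by
      rw [discreteTopology_iff_isOpen_singleton]
      intro x
      have hcont : Continuous (fun y : L => ((y : ↥Wᗮ) : EuclideanSpace ℝ (Fin n))) :=
        continuous_subtype_val.comp continuous_subtype_val
      have : {x} = (fun y : L => ((y : ↥Wᗮ) : EuclideanSpace ℝ (Fin n))) ⁻¹'
          (Metric.ball ((x : ↥Wᗮ) : EuclideanSpace ℝ (Fin n)) δ) := by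
        ext y
        simp only [Set.mem_singleton_iff, Set.mem_preimage, Metric.mem_ball, dist_eq_norm]
        constructor
        · rintro rfl; simpa using hδ
        · intro hy
          have hmem : ((y : ↥Wᗮ) : EuclideanSpace ℝ (Fin n)) - ((x : ↥Wᗮ) : EuclideanSpace ℝ (Fin n)) ∈ S := by
            constructor
            · exact H.sub_mem y.2 x.2
            · exact Wᗮ.sub_mem (y : ↥Wᗮ).2 (x : ↥Wᗮ).2
          have := hδ' _ hmem hy
          have h2 : ((y : ↥Wᗮ) : EuclideanSpace ℝ (Fin n)) = ((x : ↥Wᗮ) : EuclideanSpace ℝ (Fin n)) := by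
            rwa [sub_eq_zero] at this
          exact Subtype.ext (Subtype.ext h2)
      rw [this]
      exact hcont.isOpen_preimage _ Metric.isOpen_ball
    -- the projections of the lattice vectors 2π eⱼ
    set P := orthogonalProjection Wᗮ with hPdef
    have hPL : ∀ z ∈ H, P z ∈ L := by
      intro z hz
      rw [hLmem]
      rw [← Submodule.starProjection_apply, Submodule.starProjection_orthogonal_val, Submodule.starProjection_apply]
      exact H.sub_mem hz (hWH _ (orthogonalProjection W z).2)
    have h2pi : (2 * Real.pi) ≠ 0 := by positivity
    have hdecomp : ∀ x : EuclideanSpace ℝ (Fin n),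
        x = ∑ j, (x j / (2*Real.pi)) • ((2*Real.pi) • EuclideanSpace.single j (1:ℝ)) := by
      intro x
      conv_lhs => rw [← euclid_sum_single x]
      refine Finset.sum_congr rfl fun j _ => ?_
      rw [smul_smul, div_mul_cancel₀ _ h2pi]
    haveI hLZ : IsZLattice ℝ L := by
      refine ⟨?_⟩
      rw [eq_top_iff]
      rintro f -
      have h1 := congrArg P (hdecomp (f : EuclideanSpace ℝ (Fin n)))
      have hPf : P ((f : EuclideanSpace ℝ (Fin n))) = f :=
        orthogonalProjection_mem_subspace_eq_self f
      rw [map_sum, hPf] at h1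
      simp_rw [map_smul] at h1
      rw [h1]
      refine Submodule.sum_mem _ fun j _ => Submodule.smul_mem _ _ ?_
      have h2 : ((2*Real.pi) • P (EuclideanSpace.single j (1:ℝ)))
          = P ((2*Real.pi) • EuclideanSpace.single j (1:ℝ)) := (map_smul P _ _).symm
      rw [h2]
      exact Submodule.subset_span (hPL _ (heH j))
    haveI := ZLattice.module_finite ℝ L
    haveI := ZLattice.module_free ℝ L
    set b₀ := Module.Free.chooseBasis ℤ L with hb₀
    set b := b₀.ofZLatticeBasis ℝ L with hb
    obtain ⟨i₀⟩ := b.index_nonempty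
    set φ : EuclideanSpace ℝ (Fin n) →ₗ[ℝ] ℝ := (b.coord i₀).comp P.toLinearMap with hφdef
    have hint : ∀ z ∈ H, ∃ m : ℤ, φ z = (m : ℝ) := by
      intro z hz
      have h1 : P z ∈ span ℤ (Set.range b) := by
        rw [b₀.ofZLatticeBasis_span ℝ]
        exact hPL z hz
      obtain ⟨m, hm⟩ := (b.mem_span_iff_repr_mem ℤ _).mp h1 i₀
      refine ⟨m, ?_⟩
      have : φ z = b.repr (P z) i₀ := by
        simp [hφdef, Basis.coord_apply]
      rw [this, ← hm]
      simp [Algebra.algebraMap_eq_smul_one]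
    set k : Fin n → ℤ := fun j => (hint _ (heH j)).choose with hkdef
    have hk : ∀ j, φ ((2*Real.pi) • EuclideanSpace.single j (1:ℝ)) = ((k j : ℤ) : ℝ) :=
      fun j => (hint _ (heH j)).choose_spec
    obtain ⟨m, hm⟩ := hint α hαH
    have hsum : ∑ j, α j * ((k j : ℤ) : ℝ) = 2 * Real.pi * m := by
      have h1 : ∑ j, α j * ((k j : ℤ) : ℝ)
          = φ (∑ j, α j • ((2*Real.pi) • EuclideanSpace.single j (1:ℝ))) := by
        rw [map_sum]
        refine Finset.sum_congr rfl fun j _ => ?_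
        rw [map_smul, hk j, smul_eq_mul]
      have h2 : (∑ j, α j • ((2*Real.pi) • EuclideanSpace.single j (1:ℝ)))
          = (2*Real.pi) • α := by
        conv_rhs => rw [← euclid_sum_single α]
        rw [Finset.smul_sum]
        exact Finset.sum_congr rfl fun j _ => smul_comm _ _ _
      rw [h1, h2, map_smul, smul_eq_mul, hm]
    have hk0 : k = 0 := hα k ⟨m, hsum⟩
    have hφe : ∀ j, φ ((2*Real.pi) • EuclideanSpace.single j (1:ℝ)) = 0 := by
      intro j
      rw [hk j, hk0]
      simp
    have hφ0 : ∀ x : EuclideanSpace ℝ (Fin n), φ x = 0 := by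
      intro x
      rw [hdecomp x, map_sum]
      refine Finset.sum_eq_zero fun j _ => ?_
      rw [map_smul, hφe j, smul_zero]
    have hcontr : φ ((b i₀ : ↥Wᗮ) : EuclideanSpace ℝ (Fin n)) = 1 := by
      have hP : P ((b i₀ : ↥Wᗮ) : EuclideanSpace ℝ (Fin n)) = b i₀ :=
        orthogonalProjection_mem_subspace_eq_self (b i₀)
      simp [hφdef, hP, Basis.coord_apply]
    rw [hφ0] at hcontr
    exact one_ne_zero hcontr.symm
  intro y ε hε
  have hy : y ∈ closure (G : Set (EuclideanSpace ℝ (Fin n))) := by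
    have : (y : EuclideanSpace ℝ (Fin n)) ∈ H := hH_top y
    exact this
  obtain ⟨z, hzG, hzd⟩ := Metric.mem_closure_iff.mp hy ε hε
  obtain ⟨N, K, rfl⟩ := hzG
  exact ⟨N, K, by rwa [dist_eq_norm, sub_add_eq_sub_sub] at hzd⟩

lemma kron_recurrence {n : ℕ} (α : EuclideanSpace ℝ (Fin n)) :
    ∀ δ > 0, ∃ M : ℕ, 1 ≤ M ∧ ∃ K : Fin n → ℤ,
      ‖(M : ℝ) • α - (2 * Real.pi) • kv K‖ < δ := by
  intro δ hδ
  have hπ := Real.pi_pos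
  have h2π : (0:ℝ) < 2 * Real.pi := by linarith
  set f : ℕ → EuclideanSpace ℝ (Fin n) :=
    fun m => (WithLp.toLp 2 (fun j => Int.fract ((m:ℝ) * α j / (2*Real.pi))) : EuclideanSpace ℝ (Fin n)) with hf
  have hbound : ∀ m, f m ∈ Metric.closedBall (0 : EuclideanSpace ℝ (Fin n)) (Real.sqrt n) := by
    intro m
    rw [Metric.mem_closedBall, dist_zero_right, EuclideanSpace.norm_eq]
    refine Real.sqrt_le_sqrt ?_
    calc ∑ j, ‖f m j‖^2 ≤ ∑ _j : Fin n, (1:ℝ) := by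
          refine Finset.sum_le_sum fun j _ => ?_
          have h1 : ‖f m j‖ ≤ 1 := by
            rw [Real.norm_eq_abs, abs_of_nonneg (Int.fract_nonneg _)]
            exact (Int.fract_lt_one _).le
          nlinarith [norm_nonneg (f m j)]
      _ = (n : ℝ) := by simp
  obtain ⟨a, _, φ, hφ, hφt⟩ :=
    tendsto_subseq_of_bounded Metric.isBounded_closedBall hbound
  rw [Metric.tendsto_atTop] at hφt
  obtain ⟨i₀, hi₀⟩ := hφt (δ/16) (by positivity)
  have hd : dist (f (φ i₀)) (f (φ (i₀+1))) < δ/8 := by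
    have h1 := hi₀ i₀ le_rfl
    have h2 := hi₀ (i₀+1) (by omega)
    calc dist (f (φ i₀)) (f (φ (i₀+1)))
        ≤ dist (f (φ i₀)) a + dist (f (φ (i₀+1))) a := dist_triangle_right _ _ _
      _ < δ/16 + δ/16 := by exact add_lt_add h1 h2
      _ = δ/8 := by ring
  set m₁ := φ i₀ with hm₁
  set m₂ := φ (i₀+1) with hm₂
  have hmlt : m₁ < m₂ := hφ (by omega)
  refine ⟨m₂ - m₁, by omega, fun j => ⌊(m₂:ℝ) * α j / (2*Real.pi)⌋ - ⌊(m₁:ℝ) * α j / (2*Real.pi)⌋, ?_⟩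
  have hkey : ((m₂ - m₁ : ℕ) : ℝ) • α -
      (2 * Real.pi) • kv (fun j => ⌊(m₂:ℝ) * α j / (2*Real.pi)⌋ - ⌊(m₁:ℝ) * α j / (2*Real.pi)⌋)
      = (2 * Real.pi) • (f m₂ - f m₁) := by
    ext j
    show ((m₂ - m₁ : ℕ) : ℝ) * α j - (2 * Real.pi) * ((⌊(m₂:ℝ) * α j / (2*Real.pi)⌋ : ℤ)
        - (⌊(m₁:ℝ) * α j / (2*Real.pi)⌋ : ℤ) : ℤ) = (2 * Real.pi) * (f m₂ j - f m₁ j)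
    have hc : ((m₂ - m₁ : ℕ) : ℝ) = (m₂ : ℝ) - (m₁ : ℝ) := by
      push_cast [Nat.cast_sub hmlt.le]; ring
    rw [hc]
    simp only [hf, Int.fract]
    push_cast
    have e1 : (m₁:ℝ) * α j = 2 * Real.pi * ((m₁:ℝ) * α j / (2*Real.pi)) := by
      field_simp
    have e2 : (m₂:ℝ) * α j = 2 * Real.pi * ((m₂:ℝ) * α j / (2*Real.pi)) := by
      field_simp
    nlinarith [e1, e2]
  rw [hkey, norm_smul]
  have : ‖f m₂ - f m₁‖ < δ/8 := by
    rw [← dist_eq_norm, dist_comm]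
    exact hd
  calc |2 * Real.pi| * ‖f m₂ - f m₁‖ = (2*Real.pi) * ‖f m₂ - f m₁‖ := by
        rw [abs_of_pos h2π]
    _ < (2*Real.pi) * (δ/8) := by
        exact mul_lt_mul_of_pos_left this h2π
    _ < δ := by nlinarith [Real.pi_lt_d2]

/-- Kronecker's theorem, as used in the paper: if `α ∈ ℝⁿ` is such that the only
`k ∈ ℤⁿ` with `⟨α, k⟩ ∈ 2πℤ` is `k = 0`, then the multiples of `α` are dense in the
torus `ℝⁿ/2πℤⁿ`: for every `y ∈ ℝⁿ` and `ε > 0` there are `N ∈ ℕ` and `K ∈ ℤⁿ` with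
`‖y − N·α − 2π·K‖ < ε` (Euclidean norm). -/
theorem kronecker_dense (n : ℕ) (hn : 1 ≤ n) (α : EuclideanSpace ℝ (Fin n))
    (hα : ∀ k : Fin n → ℤ, (∃ m : ℤ, (∑ j, α j * (k j : ℝ)) = 2 * Real.pi * m) → k = 0) :
    ∀ y : EuclideanSpace ℝ (Fin n), ∀ ε > 0, ∃ (N : ℕ) (K : Fin n → ℤ),
      ‖y - (N : ℝ) • α -
        (2 * Real.pi) • (show EuclideanSpace ℝ (Fin n) from WithLp.toLp 2 (fun j => (K j : ℝ)))‖ < ε := by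
  intro y ε hε
  obtain ⟨N, K, hNK⟩ := kron_dense_int α hα y (ε/2) (by positivity)
  by_cases hN : 0 ≤ N
  · refine ⟨N.toNat, K, ?_⟩
    have hc : ((N.toNat : ℕ) : ℝ) = (N : ℝ) := by
      rw [← Int.cast_natCast, Int.toNat_of_nonneg hN]
    rw [hc]
    calc ‖y - (N:ℝ) • α - (2*Real.pi) • kv K‖ < ε/2 := hNK
      _ < ε := by linarith
  · push_neg at hN
    set q : ℕ := (-N).toNat with hqdef
    have hq1 : 1 ≤ q := by omega
    have hqN : (q : ℤ) = -N := by omega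
    have hqpos : (0:ℝ) < (q:ℝ) := by exact_mod_cast hq1
    obtain ⟨M, hM1, K', hK'⟩ := kron_recurrence α (ε/(2*q)) (by positivity)
    have hNq : 0 ≤ N + (q:ℤ) * (M:ℤ) := by
      have : (1:ℤ) ≤ (M:ℤ) := by exact_mod_cast hM1
      nlinarith [hqN, this]
    refine ⟨(N + (q:ℤ) * (M:ℤ)).toNat, K - q • K', ?_⟩
    have hcast : (((N + (q:ℤ) * (M:ℤ)).toNat : ℕ) : ℝ) = (N : ℝ) + (q:ℝ) * (M:ℝ) := by
      rw [← Int.cast_natCast, Int.toNat_of_nonneg hNq]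
      push_cast
      ring
    have hkv : kv (K - q • K') = kv K - (q:ℝ) • kv K' := by
      ext j
      show (((K j - q • K' j : ℤ)) : ℝ) = (K j : ℝ) - (q:ℝ) * (K' j : ℝ)
      rw [nsmul_eq_mul]
      push_cast
      ring
    have hexpr : y - (((N + (q:ℤ) * (M:ℤ)).toNat : ℕ) : ℝ) • α
        - (2*Real.pi) • kv (K - q • K')
        = (y - (N:ℝ) • α - (2*Real.pi) • kv K)
          - (q:ℝ) • ((M:ℝ) • α - (2*Real.pi) • kv K') := by
      rw [hcast, hkv]
      module
    calc ‖y - (((N + (q:ℤ) * (M:ℤ)).toNat : ℕ) : ℝ) • α - (2*Real.pi) • kv (K - q • K')‖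
        = ‖(y - (N:ℝ) • α - (2*Real.pi) • kv K)
          - (q:ℝ) • ((M:ℝ) • α - (2*Real.pi) • kv K')‖ := by rw [hexpr]
      _ ≤ ‖y - (N:ℝ) • α - (2*Real.pi) • kv K‖
          + ‖(q:ℝ) • ((M:ℝ) • α - (2*Real.pi) • kv K')‖ := norm_sub_le _ _
      _ < ε/2 + (q:ℝ) * (ε/(2*q)) := by
          refine add_lt_add hNK ?_
          rw [norm_smul, Real.norm_eq_abs, abs_of_pos hqpos]
          exact mul_lt_mul_of_pos_left hK' hqpos
      _ = ε := by field_simp; ring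
end

section
/- Let n ≥ 1, let μ : Fin n → ℂ satisfy Re μⱼ > 0 for all j, let k ≥ 1 be an integer, and let α : Fin n → ℕ be a multi-index. Then the family indexed by m : Fin n → ℕ given by m ↦ (∏_{j=1}^{n} (−k·(mⱼ + 1/2))^{αⱼ}) · exp(−k·∑_{j=1}^{n} (mⱼ + 1/2)·μⱼ) has sum (in the sense of HasSum, i.e. unconditional summability) equal to ∏_{j=1}^{n} D_{j,αⱼ}(k), where D_{j,l}(k) denotes the l-th complex derivative of the function t ↦ (2·sinh(k·t/2))⁻¹ evaluated at μⱼ. (This is the identity p(i k⁻¹ ∂_μ) ∏ⱼ (2 sinh(kμⱼ/2))⁻¹ = ∑_{m∈ℕⁿ} p((m + e₀/2)/i) e^{−⟨m + e₀/2, kμ⟩} of the paper, monomial by monomial.) -/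
open Complex BigOperators

/-- Summability of `(m+1)^p * r^m` for `0 ≤ r < 1`. -/
lemma summable_succ_pow_mul_geometric {r : ℝ} (hr0 : 0 < r) (hr : r < 1) (p : ℕ) :
    Summable (fun m : ℕ => ((m : ℝ) + 1) ^ p * r ^ m) := by
  have h : Summable (fun m : ℕ => (m : ℝ) ^ p * r ^ m) := by
    apply summable_pow_mul_geometric_of_norm_lt_one
    rw [Real.norm_eq_abs, _root_.abs_of_nonneg hr0.le]; exact hr
  have h2 : Summable ((fun m : ℕ => (m : ℝ) ^ p * r ^ m) ∘ Nat.succ) :=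
    h.comp_injective Nat.succ_injective
  have h3 := h2.mul_left r⁻¹
  refine h3.congr fun m => ?_
  simp only [Function.comp_apply, Nat.succ_eq_add_one, Nat.cast_add, Nat.cast_one]
  rw [pow_succ]
  field_simp

/-- The one-dimensional statement: term-by-term differentiation of the geometric
series for `(2 sinh(kt/2))⁻¹`. -/
lemma oneDim (k : ℕ) (hk : 1 ≤ k) (l : ℕ) :
    ∀ z : ℂ, 0 < z.re →
      HasSum (fun m : ℕ => (-(k : ℂ) * ((m : ℂ) + 1 / 2)) ^ l *
          Complex.exp (-(k : ℂ) * ((m : ℂ) + 1 / 2) * z))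
        (iteratedDeriv l (fun t : ℂ => (2 * Complex.sinh ((k : ℂ) * t / 2))⁻¹) z) := by
  have hkpos : (0 : ℝ) < k := by exact_mod_cast hk
  induction l with
  | zero =>
    intro z hz
    have hnorm : ‖Complex.exp (-(k : ℂ) * z)‖ < 1 := by
      rw [Complex.norm_exp]
      apply Real.exp_lt_one_iff.mpr
      have : (-(k : ℂ) * z).re = -(k * z.re) := by
        simp [Complex.mul_re]
      rw [this]
      nlinarith
    have hgeom := hasSum_geometric_of_norm_lt_one hnorm
    have hmul := hgeom.mul_left (Complex.exp (-(k : ℂ) * z / 2))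
    have h1 : (1 : ℂ) - Complex.exp (-(k : ℂ) * z) ≠ 0 := by
      intro h
      have : Complex.exp (-(k : ℂ) * z) = 1 := by linear_combination -h
      rw [this] at hnorm; simp at hnorm
    have hval : Complex.exp (-(k : ℂ) * z / 2) * (1 - Complex.exp (-(k : ℂ) * z))⁻¹
        = (2 * Complex.sinh ((k : ℂ) * z / 2))⁻¹ := by
      rw [show Complex.sinh ((k : ℂ) * z / 2) = (Complex.exp ((k : ℂ) * z / 2) - Complex.exp (-((k : ℂ) * z / 2))) / 2 from rfl]
      have he : Complex.exp ((k : ℂ) * z / 2) ≠ 0 := Complex.exp_ne_zero _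
      have he2 : Complex.exp (-(k : ℂ) * z / 2) ≠ 0 := Complex.exp_ne_zero _
      have key : 2 * ((Complex.exp ((k : ℂ) * z / 2) - Complex.exp (-((k : ℂ) * z / 2))) / 2)
          = Complex.exp ((k : ℂ) * z / 2) * (1 - Complex.exp (-(k : ℂ) * z)) := by
        have : Complex.exp ((k : ℂ) * z / 2) * Complex.exp (-(k : ℂ) * z)
            = Complex.exp (-((k : ℂ) * z / 2)) := by
          rw [← Complex.exp_add]; ring_nf
        rw [mul_sub, mul_one, this]; ring
      rw [key, mul_inv]
      have : (Complex.exp ((k : ℂ) * z / 2))⁻¹ = Complex.exp (-(k : ℂ) * z / 2) := by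
        rw [← Complex.exp_neg]; ring_nf
      rw [this]
    rw [iteratedDeriv_zero, ← hval]
    refine HasSum.congr_fun hmul fun m => ?_
    rw [pow_zero, one_mul, ← Complex.exp_nat_mul, ← Complex.exp_add]
    congr 1
    push_cast
    ring
  | succ l ih =>
    intro z hz
    set ε : ℝ := z.re / 2 with hε
    have hεpos : 0 < ε := by positivity
    set U : Set ℂ := {w : ℂ | ε < w.re} with hU
    have hUopen : IsOpen U := isOpen_lt continuous_const Complex.continuous_re
    have hUconv : Convex ℝ U := convex_halfSpace_re_gt ε
    have hUconn : IsPreconnected U := hUconv.isPreconnected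
    have hzU : z ∈ U := by simp only [hU, Set.mem_setOf_eq, hε]; linarith
    have hUpos : ∀ w ∈ U, 0 < w.re := fun w hw => lt_trans hεpos hw
    -- the functions and their derivatives
    set c : ℕ → ℂ := fun m => -(k : ℂ) * ((m : ℂ) + 1 / 2) with hc
    set g : ℕ → ℂ → ℂ := fun m w => c m ^ l * Complex.exp (c m * w) with hg
    set g' : ℕ → ℂ → ℂ := fun m w => c m ^ (l + 1) * Complex.exp (c m * w) with hg'
    have hderiv : ∀ m w, HasDerivAt (g m) (g' m w) w := by
      intro m w
      have h1 : HasDerivAt (fun w : ℂ => c m * w) (c m) w := by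
        simpa using (hasDerivAt_id w).const_mul (c m)
      have h2 := h1.cexp
      have h3 := h2.const_mul (c m ^ l)
      refine h3.congr_deriv ?_
      change _ = c m ^ (l + 1) * Complex.exp (c m * w)
      ring
    set r : ℝ := Real.exp (-(k * ε)) with hr
    have hr0 : 0 < r := Real.exp_pos _
    have hr1 : r < 1 := by
      apply Real.exp_lt_one_iff.mpr
      nlinarith
    have hcnorm : ∀ m : ℕ, ‖c m‖ = k * ((m : ℝ) + 1 / 2) := by
      intro m
      simp only [hc]
      simp only [norm_mul, norm_neg, Complex.norm_natCast]
      congr 1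
      rw [show ((m : ℂ) + 1 / 2) = (((m : ℝ) + 1 / 2 : ℝ) : ℂ) by push_cast; ring,
        Complex.norm_real, Real.norm_of_nonneg (by positivity)]
    set u : ℕ → ℝ := fun m => (k * ((m : ℝ) + 1)) ^ (l + 1) * r ^ m with hu2
    have hu : Summable u := by
      have := (summable_succ_pow_mul_geometric hr0 hr1 (l + 1)).mul_left ((k : ℝ) ^ (l + 1))
      refine this.congr fun m => ?_
      simp only [hu2, mul_pow]
      ring
    have hbound : ∀ m w, w ∈ U → ‖g' m w‖ ≤ u m := by
      intro m w hw
      simp only [hg', norm_mul, norm_pow, Complex.norm_exp, hcnorm]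
      have hre : (c m * w).re = -(k * ((m : ℝ) + 1 / 2)) * w.re := by
        simp only [hc]
        have : (-(k : ℂ) * ((m : ℂ) + 1 / 2)) = (((-(k * ((m : ℝ) + 1 / 2))) : ℝ) : ℂ) := by
          push_cast; ring
        rw [this, Complex.re_ofReal_mul]
      rw [hre, hu2]
      have hm12 : (0 : ℝ) ≤ (m : ℝ) + 1 / 2 := by positivity
      have h1 : (k * ((m : ℝ) + 1 / 2)) ^ (l + 1) ≤ (k * ((m : ℝ) + 1)) ^ (l + 1) := by
        apply pow_le_pow_left₀ (by positivity)
        nlinarith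
      have h2 : Real.exp (-(k * ((m : ℝ) + 1 / 2)) * w.re) ≤ r ^ m := by
        rw [hr, ← Real.exp_nat_mul]
        apply Real.exp_le_exp.mpr
        have hwε : ε < w.re := hw
        have : (m : ℝ) * -(k * ε) = -(k * ((m : ℝ)) * ε) := by ring
        rw [this]
        have hkm : (0 : ℝ) ≤ k * (m : ℝ) := by positivity
        nlinarith [hUpos w hw]
      calc (k * ((m : ℝ) + 1 / 2)) ^ (l + 1) * Real.exp (-(k * ((m : ℝ) + 1 / 2)) * w.re)
          ≤ (k * ((m : ℝ) + 1)) ^ (l + 1) * Real.exp (-(k * ((m : ℝ) + 1 / 2)) * w.re) := by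
            apply mul_le_mul_of_nonneg_right h1 (Real.exp_pos _).le
        _ ≤ (k * ((m : ℝ) + 1)) ^ (l + 1) * r ^ m := by
            apply mul_le_mul_of_nonneg_left h2 (by positivity)
    have hg0 : Summable fun m => g m z := (ih z hz).summable
    have hDeriv := hasDerivAt_tsum_of_isPreconnected hu hUopen hUconn
      (fun m w _ => hderiv m w) hbound hzU hg0 hzU
    -- Summability of g' at z
    have hg'sum : Summable fun m => g' m z :=
      Summable.of_norm_bounded hu (fun m => hbound m z hzU)
    -- iteratedDeriv l f agrees with the tsum on U
    have hEq : ∀ w ∈ U, iteratedDeriv l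
        (fun t : ℂ => (2 * Complex.sinh ((k : ℂ) * t / 2))⁻¹) w = ∑' m, g m w := by
      intro w hw
      exact ((ih w (hUpos w hw)).tsum_eq).symm
    have hDeriv2 : HasDerivAt (iteratedDeriv l
        (fun t : ℂ => (2 * Complex.sinh ((k : ℂ) * t / 2))⁻¹)) (∑' m, g' m z) z := by
      apply hDeriv.congr_of_eventuallyEq
      filter_upwards [hUopen.mem_nhds hzU] with w hw
      exact hEq w hw
    have hfinal : iteratedDeriv (l + 1)
        (fun t : ℂ => (2 * Complex.sinh ((k : ℂ) * t / 2))⁻¹) z = ∑' m, g' m z := by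
      rw [iteratedDeriv_succ]
      exact hDeriv2.deriv
    rw [hfinal]
    exact hg'sum.hasSum

set_option maxHeartbeats 1000000 in
/-- Finite products of absolutely summable families over a pi type. -/
lemma hasSum_pi_prod : ∀ (n : ℕ) {𝕜 : Type} [RCLike 𝕜] {ι : Type} (f : Fin n → ι → 𝕜)
    (a : Fin n → 𝕜), (∀ j, HasSum (f j) (a j)) → (∀ j, Summable fun m => ‖f j m‖) →
    HasSum (fun m : Fin n → ι => ∏ j, f j (m j)) (∏ j, a j) := by
  intro n
  induction n with
  | zero =>
    intro 𝕜 _ ι f a _ _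
    simp only [Finset.univ_eq_empty, Finset.prod_empty]
    exact hasSum_single (f := fun _ : Fin 0 → ι => (1 : 𝕜)) default
      (fun b' hb' => absurd (Subsingleton.elim b' default) hb')
  | succ n IH =>
    intro 𝕜 _ ι f a h hnorm
    obtain ⟨G, hG⟩ : ∃ G : (Fin n → ι) → 𝕜, G = fun m => ∏ j, f j.succ (m j) := ⟨_, rfl⟩
    have hrest : HasSum G (∏ j : Fin n, a j.succ) := by
      rw [hG]
      exact IH (fun j => f j.succ) (fun j => a j.succ) (fun j => h j.succ)
        (fun j => hnorm j.succ)
    have hrestnorm : Summable (fun m : Fin n → ι => ‖G m‖) := by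
      have : HasSum (fun m : Fin n → ι => ∏ j, ‖f j.succ (m j)‖)
          (∏ j : Fin n, ∑' m, ‖f j.succ m‖) := by
        apply IH (fun j m => ‖f j.succ m‖) (fun j => ∑' m, ‖f j.succ m‖)
          (fun j => (hnorm j.succ).hasSum)
        intro j
        simp only [norm_norm]
        exact hnorm j.succ
      refine this.summable.congr fun m => ?_
      rw [hG, norm_prod]
    have hmulsum : Summable (fun x : ι × (Fin n → ι) => f 0 x.1 * G x.2) :=
      summable_mul_of_summable_norm (hnorm 0) hrestnorm
    have hmul := (h 0).mul hrest hmulsum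
    let e : (Fin (n + 1) → ι) ≃ ι × (Fin n → ι) :=
      ⟨fun m => (m 0, fun j => m j.succ), fun p => Fin.cons p.1 p.2,
        fun m => by funext j; exact Fin.cases rfl (fun i => rfl) j,
        fun p => by simp⟩
    have := (Equiv.hasSum_iff e).mpr hmul
    rw [Fin.prod_univ_succ]
    refine HasSum.congr_fun this fun m => ?_
    show ∏ j, f j (m j) = f 0 (m 0) * G (fun j => m j.succ)
    rw [hG, Fin.prod_univ_succ]

/-- The identity `p(i k⁻¹ ∂_μ) ∏ⱼ (2 sinh(kμⱼ/2))⁻¹ = ∑_{m∈ℕⁿ} p((m+e₀/2)/i) e^{−⟨m+e₀/2,kμ⟩}`,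
monomial by monomial: for `Re μⱼ > 0`, `k ≥ 1` and a multi-index `α`, the family
`m ↦ (∏ⱼ (−k(mⱼ+1/2))^{αⱼ})·exp(−k ∑ⱼ (mⱼ+1/2)μⱼ)` has sum
`∏ⱼ D_{j,αⱼ}(k)`, where `D_{j,l}(k)` is the `l`-th derivative of
`t ↦ (2 sinh(kt/2))⁻¹` at `μⱼ`. -/
theorem monomial_derivative_sum (n : ℕ) (hn : 1 ≤ n) (μ : Fin n → ℂ)
    (hμ : ∀ j, 0 < (μ j).re) (k : ℕ) (hk : 1 ≤ k) (α : Fin n → ℕ) :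
    HasSum
      (fun m : Fin n → ℕ =>
        (∏ j, (-(k : ℂ) * ((m j : ℂ) + 1 / 2)) ^ α j) *
          Complex.exp (-(k : ℂ) * ∑ j, ((m j : ℂ) + 1 / 2) * μ j))
      (∏ j, iteratedDeriv (α j)
        (fun t : ℂ => (2 * Complex.sinh ((k : ℂ) * t / 2))⁻¹) (μ j)) := by
  set F : Fin n → ℕ → ℂ := fun j m =>
    (-(k : ℂ) * ((m : ℂ) + 1 / 2)) ^ α j * Complex.exp (-(k : ℂ) * ((m : ℂ) + 1 / 2) * μ j)
    with hF
  have hsum : ∀ j, HasSum (F j)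
      (iteratedDeriv (α j) (fun t : ℂ => (2 * Complex.sinh ((k : ℂ) * t / 2))⁻¹) (μ j)) :=
    fun j => oneDim k hk (α j) (μ j) (hμ j)
  have hnorm : ∀ j, Summable fun m => ‖F j m‖ :=
    fun j => summable_norm_iff.mpr (hsum j).summable
  have := hasSum_pi_prod n F _ hsum hnorm
  refine HasSum.congr_fun this fun m => ?_
  rw [hF]
  simp only
  rw [Finset.prod_mul_distrib]
  congr 1
  rw [← Complex.exp_sum]
  congr 1
  rw [Finset.mul_sum]
  refine Finset.sum_congr rfl fun j _ => ?_
  ring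
end
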